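/- Let N ≥ 1, let φ_1,…,φ_N : ℝ×ℝ → ℝ be smooth functions and λ_{ij} : ℝ → ℝ differentiable functions of t, ξ : ℝ → ℝ continuous, satisfying for all (x,t) and all 1 ≤ i ≤ N: −∂_x²φ_i = Σ_{j=1}^N λ_{ij}(t) φ_j and ∂_t φ_i = −4 ∂_x³ φ_i + ξ(t) φ_i. Then the compatibility of mixed derivatives forces Σ_{j=1}^N λ_{ij}'(t) φ_j(x,t) = 0 for all (x,t) and all 1 ≤ i ≤ N. Consequently, if there exist indices i₀, j₀ and a time t₀ with λ_{i₀ j₀}'(t₀) ≠ 0, then the Wronskian W(φ_1,…,φ_N)(x,t₀) = 0 for every x. -/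

import Mathlib

/-- Partial derivative with respect to the first variable `x`. -/
noncomputable def px (f : ℝ × ℝ → ℝ) : ℝ × ℝ → ℝ :=
  fun p => deriv (fun x => f (x, p.2)) p.1

/-- Partial derivative with respect to the second variable `t`. -/
noncomputable def pt (f : ℝ × ℝ → ℝ) : ℝ × ℝ → ℝ :=
  fun p => deriv (fun t => f (p.1, t)) p.2

/-- The Wronskian determinant in the `x`-variable of `N` functions of `(x,t)`. -/
noncomputable def wronskian (N : ℕ) (φ : Fin N → ℝ × ℝ → ℝ) (p : ℝ × ℝ) : ℝ :=
  Matrix.det (Matrix.of fun i j : Fin N => (px^[(j : ℕ)] (φ i)) p)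

lemma px_eq {f : ℝ × ℝ → ℝ} (hf : ContDiff ℝ (⊤ : ℕ∞) f) :
    px f = fun p => fderiv ℝ f p (1, 0) := by
  funext p
  have h := ((hf.differentiable (by simp)) (p.1, p.2)).hasFDerivAt.comp_hasDerivAt p.1
    ((hasDerivAt_id p.1).prodMk (hasDerivAt_const p.1 p.2))
  simp only [Prod.mk.eta] at h
  exact h.deriv

lemma pt_eq {f : ℝ × ℝ → ℝ} (hf : ContDiff ℝ (⊤ : ℕ∞) f) :
    pt f = fun p => fderiv ℝ f p (0, 1) := by
  funext p
  have h := ((hf.differentiable (by simp)) (p.1, p.2)).hasFDerivAt.comp_hasDerivAt p.2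
    ((hasDerivAt_const p.2 p.1).prodMk (hasDerivAt_id p.2))
  simp only [Prod.mk.eta] at h
  exact h.deriv

lemma contDiff_px {f : ℝ × ℝ → ℝ} (hf : ContDiff ℝ (⊤ : ℕ∞) f) : ContDiff ℝ (⊤ : ℕ∞) (px f) := by
  rw [px_eq hf]
  exact (hf.fderiv_right (by simp)).clm_apply contDiff_const

lemma contDiff_pt {f : ℝ × ℝ → ℝ} (hf : ContDiff ℝ (⊤ : ℕ∞) f) : ContDiff ℝ (⊤ : ℕ∞) (pt f) := by
  rw [pt_eq hf]
  exact (hf.fderiv_right (by simp)).clm_apply contDiff_const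

lemma contDiff_px_iter {f : ℝ × ℝ → ℝ} (hf : ContDiff ℝ (⊤ : ℕ∞) f) (k : ℕ) :
    ContDiff ℝ (⊤ : ℕ∞) (px^[k] f) := by
  induction k with
  | zero => exact hf
  | succ k ih => rw [Function.iterate_succ_apply']; exact contDiff_px ih

lemma sliceX_hasDerivAt {f : ℝ × ℝ → ℝ} (hf : ContDiff ℝ (⊤ : ℕ∞) f) (x t : ℝ) :
    HasDerivAt (fun x' => f (x', t)) (px f (x, t)) x := by
  have hd : Differentiable ℝ (fun x' : ℝ => f (x', t)) :=
    (hf.differentiable (by simp)).comp (differentiable_id.prodMk (differentiable_const t))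
  exact (hd x).hasDerivAt

lemma sliceT_hasDerivAt {f : ℝ × ℝ → ℝ} (hf : ContDiff ℝ (⊤ : ℕ∞) f) (x t : ℝ) :
    HasDerivAt (fun t' => f (x, t')) (pt f (x, t)) t := by
  have hd : Differentiable ℝ (fun t' : ℝ => f (x, t')) :=
    (hf.differentiable (by simp)).comp ((differentiable_const x).prodMk differentiable_id)
  exact (hd t).hasDerivAt

lemma pt_px_comm {f : ℝ × ℝ → ℝ} (hf : ContDiff ℝ (⊤ : ℕ∞) f) : pt (px f) = px (pt f) := by
  funext p
  have hF : ContDiff ℝ (⊤ : ℕ∞) (fderiv ℝ f) := hf.fderiv_right (by simp)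
  have hFd : Differentiable ℝ (fderiv ℝ f) := hF.differentiable (by simp)
  have hsymm : ∀ v w : ℝ × ℝ,
      fderiv ℝ (fderiv ℝ f) p v w = fderiv ℝ (fderiv ℝ f) p w v :=
    second_derivative_symmetric (fun y => ((hf.differentiable (by simp)) y).hasFDerivAt)
      (hFd p).hasFDerivAt
  have key : ∀ v w : ℝ × ℝ,
      fderiv ℝ (fun q => fderiv ℝ f q v) p w = fderiv ℝ (fderiv ℝ f) p w v := by
    intro v w
    have h := ((ContinuousLinearMap.apply ℝ ℝ v).hasFDerivAt.comp p (hFd p).hasFDerivAt)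
    have h' : HasFDerivAt (fun q => fderiv ℝ f q v)
        (((ContinuousLinearMap.apply ℝ ℝ) v).comp (fderiv ℝ (fderiv ℝ f) p)) p := h
    rw [h'.fderiv]
    rfl
  rw [pt_eq (contDiff_px hf), px_eq (contDiff_pt hf), px_eq hf, pt_eq hf]
  simp only [key]
  exact hsymm _ _

lemma pt_px2_comm {f : ℝ × ℝ → ℝ} (hf : ContDiff ℝ (⊤ : ℕ∞) f) :
    pt (px^[2] f) = px (px (pt f)) := by
  have e2 : px^[2] f = px (px f) := by
    rw [Function.iterate_succ_apply', Function.iterate_one]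
  rw [e2, pt_px_comm (contDiff_px hf), pt_px_comm hf]

/-- Compatibility of mixed derivatives forces `∑_j λ_{ij}'(t) φ_j = 0`; consequently if some
`λ_{i₀j₀}'(t₀) ≠ 0`, then the Wronskian `W(φ_1,…,φ_N)(·, t₀)` vanishes identically. -/
theorem compatibility_kills_wronskian
    (N : ℕ) (hN : 1 ≤ N) (φ : Fin N → ℝ × ℝ → ℝ)
    (hφ : ∀ i, ContDiff ℝ (⊤ : ℕ∞) (φ i))
    (lam : Fin N → Fin N → ℝ → ℝ) (ξ : ℝ → ℝ)
    (hlam : ∀ i j, Differentiable ℝ (lam i j)) (hξ : Continuous ξ)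
    (hcond1 : ∀ i, ∀ p : ℝ × ℝ, -((px^[2] (φ i)) p) = ∑ j, lam i j p.2 * φ j p)
    (hcond2 : ∀ i, ∀ p : ℝ × ℝ,
      pt (φ i) p = -4 * (px^[3] (φ i)) p + ξ p.2 * φ i p) :
    (∀ i, ∀ p : ℝ × ℝ, ∑ j, deriv (lam i j) p.2 * φ j p = 0) ∧
    (∀ i₀ j₀ : Fin N, ∀ t₀ : ℝ, deriv (lam i₀ j₀) t₀ ≠ 0 →
      ∀ x : ℝ, wronskian N φ (x, t₀) = 0) := by
  have stepA : ∀ i, ∀ q : ℝ × ℝ, px^[2] (φ i) q = -∑ j, lam i j q.2 * φ j q := by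
    intro i q; linarith [hcond1 i q]
  have stepB : ∀ i k, ∀ q : ℝ × ℝ,
      px^[k + 2] (φ i) q = -∑ j, lam i j q.2 * px^[k] (φ j) q := by
    intro i k
    induction k with
    | zero => intro q; simpa using stepA i q
    | succ k ih =>
      intro q
      have hfun : px^[k + 2] (φ i) = fun q => -∑ j, lam i j q.2 * px^[k] (φ j) q :=
        funext ih
      have h1 : px^[k + 1 + 2] (φ i) = px (px^[k + 2] (φ i)) :=
        Function.iterate_succ_apply' px (k + 2) (φ i)
      have esucc : ∀ j : Fin N, px^[k + 1] (φ j) = px (px^[k] (φ j)) := fun j =>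
        Function.iterate_succ_apply' px k (φ j)
      rw [h1, hfun]
      have hD : HasDerivAt (fun x => -∑ j, lam i j q.2 * px^[k] (φ j) (x, q.2))
          (-∑ j, lam i j q.2 * px^[k + 1] (φ j) q) q.1 := by
        have h := (HasDerivAt.fun_sum (u := Finset.univ) fun j _ =>
          (sliceX_hasDerivAt (contDiff_px_iter (hφ j) k) q.1 q.2).const_mul
            (lam i j q.2)).fun_neg
        simpa [esucc] using h
      exact hD.deriv
  have part1 : ∀ i, ∀ p : ℝ × ℝ, ∑ j, deriv (lam i j) p.2 * φ j p = 0 := by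
    intro i p
    obtain ⟨x, t⟩ := p
    show ∑ j, deriv (lam i j) t * φ j (x, t) = 0
    -- Way 1
    have hfunA : (fun s => px^[2] (φ i) (x, s)) = fun s => -∑ j, lam i j s * φ j (x, s) := by
      funext s; exact stepA i (x, s)
    have way1 : HasDerivAt (fun s => px^[2] (φ i) (x, s))
        (-∑ j, (deriv (lam i j) t * φ j (x, t) + lam i j t * pt (φ j) (x, t))) t := by
      rw [hfunA]
      exact (HasDerivAt.fun_sum (u := Finset.univ) fun j _ =>
        ((hlam i j t).hasDerivAt.fun_mul (sliceT_hasDerivAt (hφ j) x t))).fun_neg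
    have way1val : pt (px^[2] (φ i)) (x, t)
        = -∑ j, (deriv (lam i j) t * φ j (x, t) + lam i j t * pt (φ j) (x, t)) :=
      way1.deriv
    -- Way 2
    have hpt : pt (φ i) = fun q => -4 * px^[3] (φ i) q + ξ q.2 * φ i q := funext (hcond2 i)
    have e4 : px^[4] (φ i) = px (px^[3] (φ i)) := Function.iterate_succ_apply' px 3 (φ i)
    have e5 : px^[5] (φ i) = px (px^[4] (φ i)) := Function.iterate_succ_apply' px 4 (φ i)
    have e2 : px^[2] (φ i) = px (px^[1] (φ i)) := Function.iterate_succ_apply' px 1 (φ i)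
    have e1 : px^[1] (φ i) = px (φ i) := by rw [Function.iterate_one]
    have hDx1 : ∀ q : ℝ × ℝ,
        px (pt (φ i)) q = -4 * px^[4] (φ i) q + ξ q.2 * px (φ i) q := by
      intro q
      rw [hpt]
      have hD : HasDerivAt (fun x' => -4 * px^[3] (φ i) (x', q.2) + ξ q.2 * φ i (x', q.2))
          (-4 * px^[4] (φ i) q + ξ q.2 * px (φ i) q) q.1 := by
        have h := ((sliceX_hasDerivAt (contDiff_px_iter (hφ i) 3) q.1 q.2).const_mul
          (-4 : ℝ)).fun_add ((sliceX_hasDerivAt (hφ i) q.1 q.2).const_mul (ξ q.2))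
        simpa [e4] using h
      exact hD.deriv
    have hpx1 : px (pt (φ i)) = fun q => -4 * px^[4] (φ i) q + ξ q.2 * px (φ i) q :=
      funext hDx1
    have hDx2 : px (px (pt (φ i))) (x, t)
        = -4 * px^[5] (φ i) (x, t) + ξ t * px^[2] (φ i) (x, t) := by
      rw [hpx1]
      have h := ((sliceX_hasDerivAt (contDiff_px_iter (hφ i) 4) x t).const_mul
        (-4 : ℝ)).add ((sliceX_hasDerivAt (contDiff_px (hφ i)) x t).const_mul (ξ t))
      have hval : -4 * px (px^[4] (φ i)) (x, t) + ξ t * px (px (φ i)) (x, t)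
          = -4 * px^[5] (φ i) (x, t) + ξ t * px^[2] (φ i) (x, t) := by
        rw [e5, e2, e1]
      exact h.deriv.trans hval
    have way2val : pt (px^[2] (φ i)) (x, t)
        = -4 * px^[5] (φ i) (x, t) + ξ t * px^[2] (φ i) (x, t) := by
      rw [pt_px2_comm (hφ i)]
      have : px (px (pt (φ i))) = px (px (pt (φ i))) := rfl
      exact hDx2
    have E := way1val.symm.trans way2val
    have Esplit : ∑ j, (deriv (lam i j) t * φ j (x, t) + lam i j t * pt (φ j) (x, t))
        = ∑ j, deriv (lam i j) t * φ j (x, t) + ∑ j, lam i j t * pt (φ j) (x, t) :=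
      Finset.sum_add_distrib
    have S2 : ∑ j, lam i j t * px^[3] (φ j) (x, t) = -(px^[5] (φ i) (x, t)) := by
      have hB : px^[5] (φ i) (x, t) = -∑ j, lam i j t * px^[3] (φ j) (x, t) :=
        stepB i 3 (x, t)
      linarith [hB]
    have S3 : ∑ j, lam i j t * φ j (x, t) = -(px^[2] (φ i) (x, t)) := by
      linarith [hcond1 i (x, t)]
    have S1 : ∑ j, lam i j t * pt (φ j) (x, t)
        = -4 * (∑ j, lam i j t * px^[3] (φ j) (x, t))
          + ξ t * ∑ j, lam i j t * φ j (x, t) := by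
      rw [Finset.mul_sum, Finset.mul_sum, ← Finset.sum_add_distrib]
      refine Finset.sum_congr rfl fun j _ => ?_
      rw [hcond2 j (x, t)]
      ring
    rw [S2, S3] at S1
    linarith [E, S1, Esplit]
  refine ⟨part1, ?_⟩
  intro i₀ j₀ t₀ hne x
  set c : Fin N → ℝ := fun j => deriv (lam i₀ j) t₀ with hc
  have hk : ∀ k : ℕ, ∀ x : ℝ, ∑ j, c j * px^[k] (φ j) (x, t₀) = 0 := by
    intro k
    induction k with
    | zero => intro x; simpa [hc] using part1 i₀ (x, t₀)
    | succ k ih =>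
      intro x
      have hfun : (fun x' => ∑ j, c j * px^[k] (φ j) (x', t₀)) = fun _ => (0 : ℝ) :=
        funext fun x' => ih x'
      have esucc : ∀ j : Fin N, px^[k + 1] (φ j) = px (px^[k] (φ j)) := fun j =>
        Function.iterate_succ_apply' px k (φ j)
      have hD : HasDerivAt (fun x' => ∑ j, c j * px^[k] (φ j) (x', t₀))
          (∑ j, c j * px^[k + 1] (φ j) (x, t₀)) x := by
        have h := HasDerivAt.fun_sum (u := Finset.univ) fun (j : Fin N) _ =>
          (sliceX_hasDerivAt (contDiff_px_iter (hφ j) k) x t₀).const_mul (c j)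
        simpa [esucc] using h
      have hD0 : HasDerivAt (fun x' => ∑ j, c j * px^[k] (φ j) (x', t₀)) 0 x := by
        rw [hfun]; exact hasDerivAt_const x 0
      exact hD.unique hD0
  have hc0 : c ≠ 0 := fun h => hne (by simpa [hc] using congrFun h j₀)
  show Matrix.det (Matrix.of fun i j : Fin N => (px^[(j : ℕ)] (φ i)) (x, t₀)) = 0
  apply Matrix.exists_vecMul_eq_zero_iff.mp
  refine ⟨c, hc0, ?_⟩
  funext k
  simp only [Matrix.vecMul, dotProduct, Matrix.of_apply, Pi.zero_apply]
  exact hk (k : ℕ) x
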